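/- arXiv:2007.02723 — 3 statements merged into one kernel-verified Lean document; each statement's English description precedes it below -/
import Mathlib

section
/- Let n ∈ ℕ with n ≥ 1, a ≥ 0, ε ∈ (0,1/2), and λ ∈ (0,1]. Then ∫_1^n x^{2ε−2}·exp(a·(x^ε − n^ε)) dx ≤ (1/(1−2ε))·(exp(a·(λ^ε·n^ε − n^ε)) + (λn)^{2ε−1}). -/
open MeasureTheory intervalIntegral

lemma stmt7_cont (r ε a N p q : ℝ) (hp : 0 < p) (hpq : p ≤ q) :
    IntervalIntegrable (fun x => x ^ r * Real.exp (a * (x ^ ε - N))) volume p q := by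
  apply ContinuousOn.intervalIntegrable
  have hne : ∀ x ∈ Set.uIcc p q, x ≠ 0 := by
    intro x hx
    rw [Set.uIcc_of_le hpq] at hx
    exact (lt_of_lt_of_le hp hx.1).ne'
  apply ContinuousOn.mul
  · intro x hx
    exact (Real.continuousAt_rpow_const x r (Or.inl (hne x hx))).continuousWithinAt
  · apply Real.continuous_exp.comp_continuousOn
    apply ContinuousOn.mul continuousOn_const
    apply ContinuousOn.sub _ continuousOn_const
    intro x hx
    exact (Real.continuousAt_rpow_const x ε (Or.inl (hne x hx))).continuousWithinAt

lemma stmt7_bound (r ε a N K p q : ℝ) (hr : r + 1 < 0) (hp : 0 < p) (hpq : p ≤ q)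
    (hK0 : 0 ≤ K) (hK : ∀ x ∈ Set.Icc p q, Real.exp (a * (x ^ ε - N)) ≤ K) :
    (∫ x in p..q, x ^ r * Real.exp (a * (x ^ ε - N))) ≤ K * p ^ (r + 1) / (-(r + 1)) := by
  have hq : 0 < q := lt_of_lt_of_le hp hpq
  have h1 : (∫ x in p..q, x ^ r * Real.exp (a * (x ^ ε - N))) ≤ ∫ x in p..q, K * x ^ r := by
    apply intervalIntegral.integral_mono_on hpq (stmt7_cont r ε a N p q hp hpq)
    · apply ContinuousOn.intervalIntegrable
      apply ContinuousOn.mul continuousOn_const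
      intro x hx
      rw [Set.uIcc_of_le hpq] at hx
      exact (Real.continuousAt_rpow_const x r
        (Or.inl (lt_of_lt_of_le hp hx.1).ne')).continuousWithinAt
    · intro x hx
      have hx0 : 0 < x := lt_of_lt_of_le hp hx.1
      have hxr : 0 ≤ x ^ r := (Real.rpow_pos_of_pos hx0 r).le
      calc x ^ r * Real.exp (a * (x ^ ε - N)) ≤ x ^ r * K :=
            mul_le_mul_of_nonneg_left (hK x hx) hxr
        _ = K * x ^ r := mul_comm _ _
  have h2 : (∫ x in p..q, K * x ^ r) = K * ((q ^ (r + 1) - p ^ (r + 1)) / (r + 1)) := by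
    rw [intervalIntegral.integral_const_mul, integral_rpow]
    right
    refine ⟨by linarith, ?_⟩
    rw [Set.uIcc_of_le hpq]
    intro h
    exact absurd h.1 (not_le.2 hp)
  have hq1 : 0 < q ^ (r + 1) := Real.rpow_pos_of_pos hq _
  have h3 : (q ^ (r + 1) - p ^ (r + 1)) / (r + 1) ≤ p ^ (r + 1) / (-(r + 1)) := by
    have he : (q ^ (r + 1) - p ^ (r + 1)) / (r + 1)
        = (p ^ (r + 1) - q ^ (r + 1)) / (-(r + 1)) := by
      rw [div_eq_div_iff (ne_of_lt hr) (ne_of_gt (by linarith : (0:ℝ) < -(r + 1)))]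
      ring
    rw [he]
    apply div_le_div_of_nonneg_right (by linarith) (by linarith)
  calc (∫ x in p..q, x ^ r * Real.exp (a * (x ^ ε - N)))
      ≤ K * ((q ^ (r + 1) - p ^ (r + 1)) / (r + 1)) := by rw [← h2]; exact h1
    _ ≤ K * (p ^ (r + 1) / (-(r + 1))) := mul_le_mul_of_nonneg_left h3 hK0
    _ = K * p ^ (r + 1) / (-(r + 1)) := (mul_div_assoc _ _ _).symm

/-- For `n ≥ 1`, `a ≥ 0`, `ε ∈ (0,1/2)` and `λ ∈ (0,1]`,
`∫_1^n x^(2ε−2) exp(a (x^ε − n^ε)) dx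
  ≤ (1/(1−2ε)) (exp(a (λ^ε n^ε − n^ε)) + (λ n)^(2ε−1))`. -/
theorem stmt_7 (n : ℕ) (hn : 1 ≤ n) (a : ℝ) (ha : 0 ≤ a) (ε lam : ℝ)
    (hε : ε ∈ Set.Ioo (0:ℝ) (1/2)) (hlam : lam ∈ Set.Ioc (0:ℝ) 1) :
    (∫ x in (1:ℝ)..(n : ℝ), x ^ (2 * ε - 2) * Real.exp (a * (x ^ ε - (n : ℝ) ^ ε)))
      ≤ (1 / (1 - 2 * ε)) *
        (Real.exp (a * (lam ^ ε * (n : ℝ) ^ ε - (n : ℝ) ^ ε)) + (lam * n) ^ (2 * ε - 1)) := by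
  obtain ⟨hε0, hε2⟩ := hε
  obtain ⟨hl0, hl1⟩ := hlam
  set N : ℝ := (n : ℝ) with hNdef
  have hN : 1 ≤ N := by rw [hNdef]; exact_mod_cast hn
  have hN0 : 0 < N := lt_of_lt_of_le one_pos hN
  set r : ℝ := 2 * ε - 2 with hrdef
  have hr : r + 1 < 0 := by simp only [hrdef]; linarith
  set c : ℝ := lam * N with hcdef
  have hc0 : 0 < c := mul_pos hl0 hN0
  have hcN : c ≤ N := by nlinarith
  have hcε : c ^ ε = lam ^ ε * N ^ ε := Real.mul_rpow hl0.le hN0.le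
  set E : ℝ := Real.exp (a * (lam ^ ε * N ^ ε - N ^ ε)) with hEdef
  have hE0 : 0 < E := Real.exp_pos _
  have hD : 0 < -(r + 1) := by simp only [hrdef]; linarith
  have hDeq : -(r + 1) = 1 - 2 * ε := by simp only [hrdef]; ring
  have hexp1 : ∀ p, 0 < p → ∀ x ∈ Set.Icc p N, Real.exp (a * (x ^ ε - N ^ ε)) ≤ 1 := by
    intro p hp x hx
    have hx0 : 0 < x := lt_of_lt_of_le hp hx.1
    have hxe : x ^ ε ≤ N ^ ε := Real.rpow_le_rpow hx0.le hx.2 hε0.le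
    have : a * (x ^ ε - N ^ ε) ≤ 0 := mul_nonpos_of_nonneg_of_nonpos ha (by linarith)
    calc Real.exp (a * (x ^ ε - N ^ ε)) ≤ Real.exp 0 := Real.exp_le_exp.2 this
      _ = 1 := Real.exp_zero
  have hce : (lam * ↑n) ^ (2 * ε - 1) = c ^ (r + 1) := by
    simp only [hcdef, hrdef, hNdef]; ring_nf
  rw [hce]
  by_cases hc1 : c ≤ 1
  · -- whole integral bounded by 1/(1-2ε), and c^(r+1) ≥ 1
    have hb := stmt7_bound r ε a (N ^ ε) 1 1 N hr one_pos hN zero_le_one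
      (hexp1 1 one_pos)
    rw [Real.one_rpow] at hb
    have hc1' : (1 : ℝ) ≤ c ^ (r + 1) :=
      Real.one_le_rpow_of_pos_of_le_one_of_nonpos hc0 hc1 (le_of_lt hr)
    calc (∫ x in (1:ℝ)..N, x ^ r * Real.exp (a * (x ^ ε - N ^ ε)))
        ≤ 1 * 1 / (-(r + 1)) := hb
      _ = 1 / (1 - 2 * ε) := by rw [hDeq]; ring
      _ ≤ (1 / (1 - 2 * ε)) * (E + c ^ (r + 1)) := by
          have h1D : 0 < 1 / (1 - 2 * ε) := by rw [← hDeq]; positivity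
          nlinarith
  · push_neg at hc1
    have hi1 : IntervalIntegrable (fun x => x ^ r * Real.exp (a * (x ^ ε - N ^ ε)))
        volume 1 c := stmt7_cont r ε a (N ^ ε) 1 c one_pos hc1.le
    have hi2 : IntervalIntegrable (fun x => x ^ r * Real.exp (a * (x ^ ε - N ^ ε)))
        volume c N := stmt7_cont r ε a (N ^ ε) c N hc0 hcN
    have hsplit : (∫ x in (1:ℝ)..N, x ^ r * Real.exp (a * (x ^ ε - N ^ ε)))
        = (∫ x in (1:ℝ)..c, x ^ r * Real.exp (a * (x ^ ε - N ^ ε)))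
          + ∫ x in c..N, x ^ r * Real.exp (a * (x ^ ε - N ^ ε)) :=
      (intervalIntegral.integral_add_adjacent_intervals hi1 hi2).symm
    have hb1 : (∫ x in (1:ℝ)..c, x ^ r * Real.exp (a * (x ^ ε - N ^ ε)))
        ≤ E * 1 / (-(r + 1)) := by
      have := stmt7_bound r ε a (N ^ ε) E 1 c hr one_pos hc1.le hE0.le ?_
      · rwa [Real.one_rpow] at this
      · intro x hx
        have hx0 : 0 < x := lt_of_lt_of_le one_pos hx.1
        have hxe : x ^ ε ≤ c ^ ε := Real.rpow_le_rpow hx0.le hx.2 hε0.le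
        rw [hcε] at hxe
        exact Real.exp_le_exp.2 (mul_le_mul_of_nonneg_left (by linarith) ha)
    have hb2 : (∫ x in c..N, x ^ r * Real.exp (a * (x ^ ε - N ^ ε)))
        ≤ 1 * c ^ (r + 1) / (-(r + 1)) :=
      stmt7_bound r ε a (N ^ ε) 1 c N hr hc0 hcN zero_le_one (hexp1 c hc0)
    rw [hsplit]
    calc (∫ x in (1:ℝ)..c, x ^ r * Real.exp (a * (x ^ ε - N ^ ε)))
          + (∫ x in c..N, x ^ r * Real.exp (a * (x ^ ε - N ^ ε)))
        ≤ E * 1 / (-(r + 1)) + 1 * c ^ (r + 1) / (-(r + 1)) := add_le_add hb1 hb2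
      _ = (1 / (1 - 2 * ε)) * (E + c ^ (r + 1)) := by rw [hDeq]; ring
end

section
/- Let d ∈ ℕ, L ∈ ℝ, T > 0, g ∈ C¹(ℝ^d, ℝ^d), and let θ^ϑ : [0,T] → ℝ^d be continuous solutions of θ_t^x = x + ∫_0^t g(θ_s^x) ds satisfying ‖θ_t^x − θ_t^y‖ ≤ ‖x − y‖·exp(L·t) for all x, y, t. Then ⟨g(x) − g(y), x − y⟩ ≤ L‖x − y‖² for all x, y ∈ ℝ^d. -/
open MeasureTheory intervalIntegral
open scoped RealInnerProductSpace

/-!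
Along the flow, `t ↦ ‖θ_t^x − θ_t^y‖²` is bounded by `t ↦ ‖x − y‖² exp(2Lt)`, and the two
functions agree at `t = 0`. Hence their right derivatives at `0` compare, and these are
`2⟪g x − g y, x − y⟫` (the integral equation gives `∂ₜθ_t^ϑ = g ϑ` at `t = 0`) and `2L‖x − y‖²`.
-/

open Set Topology

theorem ContinuousOn.integral_hasDerivWithinAt_Icc_left {E : Type*} [NormedAddCommGroup E]
    [NormedSpace ℝ E] [CompleteSpace E] {φ : ℝ → E} {a b : ℝ} (hab : a < b)
    (hφ : ContinuousOn φ (Icc a b)) :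
    HasDerivWithinAt (fun u => ∫ s in a..u, φ s) (φ a) (Icc a b) a := by
  have hIcc : Icc a b ∈ 𝓝[>] a := Icc_mem_nhdsGT hab
  refine (integral_hasDerivWithinAt_right (s := Ici a) (t := Ioi a) .refl ?_ ?_).mono
    Icc_subset_Ici_self
  · exact (hφ.stronglyMeasurableAtFilter_nhdsWithin measurableSet_Icc a).filter_mono
      (nhdsWithin_le_of_mem hIcc)
  · exact (hφ a (left_mem_Icc.2 hab.le)).mono_of_mem_nhdsWithin hIcc

theorem hasDerivWithinAt_zero_of_eq_add_integral {E : Type*} [NormedAddCommGroup E]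
    [NormedSpace ℝ E] [CompleteSpace E] {g : E → E} {θ : ℝ → E} {x : E} {T : ℝ} (hT : 0 < T)
    (hg : Continuous g) (hθc : ContinuousOn θ (Icc 0 T))
    (hθ : ∀ t ∈ Icc 0 T, θ t = x + ∫ s in (0:ℝ)..t, g (θ s)) :
    HasDerivWithinAt θ (g x) (Icc 0 T) 0 := by
  have h0 : (0:ℝ) ∈ Icc 0 T := left_mem_Icc.2 hT.le
  have hstart : θ 0 = x := by simpa using hθ 0 h0
  have hint := ((hg.comp_continuousOn hθc).integral_hasDerivWithinAt_Icc_left hT).const_add x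
  rw [Function.comp_apply, hstart] at hint
  exact hint.congr hθ (hθ 0 h0)

theorem HasDerivWithinAt.le_of_le_on_Icc {f h : ℝ → ℝ} {f' h' a b : ℝ} (hab : a < b)
    (hf : HasDerivWithinAt f f' (Icc a b) a) (hh : HasDerivWithinAt h h' (Icc a b) a)
    (hle : ∀ t ∈ Icc a b, f t ≤ h t) (heq : f a = h a) : f' ≤ h' := by
  have hmin : IsLocalMinOn (h - f) (Icc a b) a :=
    Filter.eventually_of_mem self_mem_nhdsWithin fun t ht => by
      simpa only [Pi.sub_apply, heq, sub_self, sub_nonneg] using hle t ht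
  have hcone : b - a ∈ posTangentConeAt (Icc a b) a :=
    sub_mem_posTangentConeAt_of_segment_subset (segment_eq_Icc hab.le).subset
  have hnonneg := hmin.hasFDerivWithinAt_nonneg (hh.sub hf).hasFDerivWithinAt hcone
  simp only [ContinuousLinearMap.toSpanSingleton_apply, smul_eq_mul] at hnonneg
  exact sub_nonneg.1 (nonneg_of_mul_nonneg_right hnonneg (sub_pos.2 hab))

/-- Converse of the flow contraction estimate: if the flow of a `C¹` vector field `g`
satisfies `‖θ_t^x − θ_t^y‖ ≤ ‖x − y‖ exp(Lt)` on `[0,T]`, then `g` satisfies the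
one-sided Lipschitz condition with constant `L`. -/
theorem stmt_13 (d : ℕ) (L T : ℝ) (hT : 0 < T)
    (g : EuclideanSpace ℝ (Fin d) → EuclideanSpace ℝ (Fin d)) (hg : ContDiff ℝ 1 g)
    (θ : EuclideanSpace ℝ (Fin d) → ℝ → EuclideanSpace ℝ (Fin d))
    (hθc : ∀ ϑ, ContinuousOn (θ ϑ) (Set.Icc 0 T))
    (hθ : ∀ ϑ, ∀ t ∈ Set.Icc (0:ℝ) T, θ ϑ t = ϑ + ∫ s in (0:ℝ)..t, g (θ ϑ s))
    (hcontract : ∀ x y, ∀ t ∈ Set.Icc (0:ℝ) T,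
      ‖θ x t - θ y t‖ ≤ ‖x - y‖ * Real.exp (L * t)) :
    ∀ x y, ⟪g x - g y, x - y⟫ ≤ L * ‖x - y‖ ^ 2 := by
  intro x y
  have hstart (ϑ) : θ ϑ 0 = ϑ := by simpa using hθ ϑ 0 (left_mem_Icc.2 hT.le)
  have hflow (ϑ) : HasDerivWithinAt (θ ϑ) (g ϑ) (Icc 0 T) 0 :=
    hasDerivWithinAt_zero_of_eq_add_integral hT hg.continuous (hθc ϑ) (hθ ϑ)
  have hdist : HasDerivWithinAt (fun t => ‖θ x t - θ y t‖ ^ 2)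
      (2 * ⟪x - y, g x - g y⟫) (Icc 0 T) 0 := by
    simpa only [Pi.sub_apply, hstart] using ((hflow x).sub (hflow y)).norm_sq
  have hbound : HasDerivAt (fun t => (‖x - y‖ * Real.exp (L * t)) ^ 2)
      (2 * L * ‖x - y‖ ^ 2) 0 := by
    have := (((hasDerivAt_id (0:ℝ)).const_mul L).exp.const_mul ‖x - y‖).fun_pow 2
    simp only [id_eq, mul_zero, Real.exp_zero, mul_one, Nat.cast_ofNat, Nat.add_one_sub_one,
      pow_one] at this
    exact this.congr_deriv (by ring)
  have hcompare := hdist.le_of_le_on_Icc hT hbound.hasDerivWithinAt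
    (fun t ht => pow_le_pow_left₀ (norm_nonneg _) (hcontract x y t ht) 2)
    (by simp only [hstart, mul_zero, Real.exp_zero, mul_one])
  rw [real_inner_comm]
  linarith
end

section
/- Let d ∈ ℕ, a, L ∈ ℝ, b > a, and let f ∈ C([a,b] × ℝ^d, ℝ^d) satisfy ⟨f(s,x) − f(s,y), x − y⟩ ≤ L‖x − y‖² for all s ∈ [a,b], x, y ∈ ℝ^d. Let χ_{t,·}^x : [t,b] → ℝ^d solve χ_{t,s}^x = x + ∫_t^s f(u, χ_{t,u}^x) du. Then ‖χ_{t,s}^x − χ_{t,s}^y‖ ≤ ‖x − y‖·exp(L(s − t)) for all x, y ∈ ℝ^d, t ∈ [a,b], s ∈ [t,b]. -/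
/-!
The difference `w = χ_{t,·}^x − χ_{t,·}^y` has right derivative `f(s, χ^x) − f(s, χ^y)`, so the
one-sided Lipschitz condition gives `(‖w‖²)' = 2⟪w, f(s, χ^x) − f(s, χ^y)⟫ ≤ 2L‖w‖²`.
Grönwall's inequality then bounds `‖w(s)‖²` by `‖x − y‖² exp(2L(s − t))`; take square roots.
-/

open MeasureTheory intervalIntegral Set Filter Topology Real
open scoped RealInnerProductSpace

theorem hasDerivWithinAt_Ici_of_eq_add_integral {E : Type*} [NormedAddCommGroup E]
    [NormedSpace ℝ E] [CompleteSpace E] {φ g : ℝ → E} {x : E} {t b s : ℝ}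
    (hg : ContinuousOn g (Icc t b)) (hφ : ∀ u ∈ Icc t b, φ u = x + ∫ v in t..u, g v)
    (hs : s ∈ Ico t b) : HasDerivWithinAt φ (g s) (Ici s) s := by
  obtain ⟨hts, hsb⟩ := hs
  have hIcc_Ici : Icc t b ∈ 𝓝[≥] s :=
    mem_of_superset (Icc_mem_nhdsGE hsb) (Icc_subset_Icc_left hts)
  have hIcc_Ioi : Icc t b ∈ 𝓝[>] s := nhdsWithin_mono _ Ioi_subset_Ici_self hIcc_Ici
  have hintegral : HasDerivWithinAt (fun u => ∫ v in t..u, g v) (g s) (Ici s) s :=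
    integral_hasDerivWithinAt_right
      ((hg.mono (Icc_subset_Icc_right hsb.le)).intervalIntegrable_of_Icc hts)
      ((hg.stronglyMeasurableAtFilter_nhdsWithin measurableSet_Icc s).filter_mono
        (nhdsWithin_le_of_mem hIcc_Ioi))
      ((hg s ⟨hts, hsb.le⟩).mono_of_mem_nhdsWithin hIcc_Ioi)
  exact (hintegral.const_add x).congr_of_eventuallyEq (eventually_of_mem hIcc_Ici hφ)
    (hφ s ⟨hts, hsb.le⟩)

section OneSidedLipschitz

variable {E : Type*} [NormedAddCommGroup E] [InnerProductSpace ℝ E]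
  {F : ℝ → E → E} {L t b : ℝ} {u v : ℝ → E}

theorem norm_sub_sq_le_mul_exp_of_inner_le
    (hF : ∀ s ∈ Ico t b, ∀ x y, ⟪F s x - F s y, x - y⟫ ≤ L * ‖x - y‖ ^ 2)
    (hu : ContinuousOn u (Icc t b)) (hv : ContinuousOn v (Icc t b))
    (hu' : ∀ s ∈ Ico t b, HasDerivWithinAt u (F s (u s)) (Ici s) s)
    (hv' : ∀ s ∈ Ico t b, HasDerivWithinAt v (F s (v s)) (Ici s) s) :
    ∀ s ∈ Icc t b, ‖u s - v s‖ ^ 2 ≤ ‖u t - v t‖ ^ 2 * exp (2 * L * (s - t)) := by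
  intro s hs
  have hgronwall := le_gronwallBound_of_liminf_deriv_right_le (δ := ‖u t - v t‖ ^ 2)
    (K := 2 * L) (ε := 0) (f := fun s => ‖u s - v s‖ ^ 2)
    (f' := fun s => 2 * ⟪u s - v s, F s (u s) - F s (v s)⟫)
    ((hu.sub hv).norm.pow 2)
    (fun s hs _ hr => ((hu' s hs).sub (hv' s hs)).norm_sq.liminf_right_slope_le hr)
    le_rfl
    (fun s hs => by
      have := hF s hs (u s) (v s)
      rw [real_inner_comm] at this
      linarith)
    s hs
  rwa [gronwallBound_ε0] at hgronwall

theorem norm_sub_le_mul_exp_of_inner_le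
    (hF : ∀ s ∈ Ico t b, ∀ x y, ⟪F s x - F s y, x - y⟫ ≤ L * ‖x - y‖ ^ 2)
    (hu : ContinuousOn u (Icc t b)) (hv : ContinuousOn v (Icc t b))
    (hu' : ∀ s ∈ Ico t b, HasDerivWithinAt u (F s (u s)) (Ici s) s)
    (hv' : ∀ s ∈ Ico t b, HasDerivWithinAt v (F s (v s)) (Ici s) s) :
    ∀ s ∈ Icc t b, ‖u s - v s‖ ≤ ‖u t - v t‖ * exp (L * (s - t)) := by
  intro s hs
  refine (pow_le_pow_iff_left₀ (norm_nonneg _) (by positivity) two_ne_zero).1 ?_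
  calc ‖u s - v s‖ ^ 2 ≤ ‖u t - v t‖ ^ 2 * exp (2 * L * (s - t)) :=
        norm_sub_sq_le_mul_exp_of_inner_le hF hu hv hu' hv' s hs
    _ = (‖u t - v t‖ * exp (L * (s - t))) ^ 2 := by
        rw [mul_pow, ← exp_nat_mul]
        ring_nf

end OneSidedLipschitz

theorem stmt_14_general (d : ℕ) (a L b : ℝ)
    (f : ℝ → EuclideanSpace ℝ (Fin d) → EuclideanSpace ℝ (Fin d))
    (hf : ContinuousOn (fun p : ℝ × EuclideanSpace ℝ (Fin d) => f p.1 p.2)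
      (Set.Icc a b ×ˢ Set.univ))
    (hmono : ∀ s ∈ Set.Icc a b, ∀ x y, ⟪f s x - f s y, x - y⟫ ≤ L * ‖x - y‖ ^ 2)
    (χ : ℝ → EuclideanSpace ℝ (Fin d) → ℝ → EuclideanSpace ℝ (Fin d))
    (hχc : ∀ t ∈ Set.Icc a b, ∀ x, ContinuousOn (χ t x) (Set.Icc t b))
    (hχ : ∀ t ∈ Set.Icc a b, ∀ x, ∀ s ∈ Set.Icc t b,
      χ t x s = x + ∫ u in t..s, f u (χ t x u)) :
    ∀ x y, ∀ t ∈ Set.Icc a b, ∀ s ∈ Set.Icc t b,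
      ‖χ t x s - χ t y s‖ ≤ ‖x - y‖ * Real.exp (L * (s - t)) := by
  intro x y t ht
  have hsub : Icc t b ⊆ Icc a b := Icc_subset_Icc_left ht.1
  have hflow (z) : ∀ s ∈ Ico t b, HasDerivWithinAt (χ t z) (f s (χ t z s)) (Ici s) s :=
    fun _ hs => hasDerivWithinAt_Ici_of_eq_add_integral
      (hf.comp (continuousOn_id.prodMk (hχc t ht z)) fun _ hu => ⟨hsub hu, trivial⟩) (hχ t ht z) hs
  have hinit (z) : χ t z t = z := by simpa using hχ t ht z t ⟨le_rfl, ht.2⟩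
  simpa only [hinit] using norm_sub_le_mul_exp_of_inner_le
    (fun s hs => hmono s (hsub (Ico_subset_Icc_self hs))) (hχc t ht x) (hχc t ht y)
    (hflow x) (hflow y)

/-- Stability estimate for flows of a nonautonomous ODE with a one-sided Lipschitz
vector field `f`: `‖χ_{t,s}^x − χ_{t,s}^y‖ ≤ ‖x − y‖ exp(L(s−t))`. -/
theorem stmt_14 (d : ℕ) (a L b : ℝ) (hab : a < b)
    (f : ℝ → EuclideanSpace ℝ (Fin d) → EuclideanSpace ℝ (Fin d))
    (hf : ContinuousOn (fun p : ℝ × EuclideanSpace ℝ (Fin d) => f p.1 p.2)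
      (Set.Icc a b ×ˢ Set.univ))
    (hmono : ∀ s ∈ Set.Icc a b, ∀ x y, ⟪f s x - f s y, x - y⟫ ≤ L * ‖x - y‖ ^ 2)
    (χ : ℝ → EuclideanSpace ℝ (Fin d) → ℝ → EuclideanSpace ℝ (Fin d))
    (hχc : ∀ t ∈ Set.Icc a b, ∀ x, ContinuousOn (χ t x) (Set.Icc t b))
    (hχ : ∀ t ∈ Set.Icc a b, ∀ x, ∀ s ∈ Set.Icc t b,
      χ t x s = x + ∫ u in t..s, f u (χ t x u)) :
    ∀ x y, ∀ t ∈ Set.Icc a b, ∀ s ∈ Set.Icc t b,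
      ‖χ t x s - χ t y s‖ ≤ ‖x - y‖ * Real.exp (L * (s - t)) :=
  stmt_14_general d a L b f hf hmono χ hχc hχ
end
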